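/- arXiv:1904.00161 — 2 statements merged into one kernel-verified Lean document; each statement's English description precedes it below -/
import Mathlib

section
/- Let G be a group and n ≥ 3. Then the n-fold Higgins commutator of n copies of ⊤ (G viewed as a subgroup of itself) equals the left-nested iterated commutator subgroup of n copies of ⊤ and hence the (n−1)-st term of the lower central series: H(⊤, …, ⊤) = ⁅⋯⁅⁅⊤,⊤⁆,⊤⁆, …, ⊤⁆ = lowerCentralSeries G (n−1). -/
/-- The homomorphism on the free product `Monoid.CoprodI` of the subgroups `K i`
that is trivial on the `k`-th free factor and the canonical inclusion on every
other free factor. -/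
def piHat {G : Type*} [Group G] {n : ℕ} (K : Fin n → Subgroup G) (k : Fin n) :
    Monoid.CoprodI (fun i => ↥(K i)) →* Monoid.CoprodI (fun i => ↥(K i)) :=
  Monoid.CoprodI.lift
    (fun i => if i = k then 1 else Monoid.CoprodI.of (M := fun i => ↥(K i)) (i := i))

/-- The `n`-fold co-smash product `K₁ ◇ ⋯ ◇ Kₙ` of subgroups of `G`: the
intersection of the kernels of the homomorphisms `piHat K k`. -/
def cosmash {G : Type*} [Group G] {n : ℕ} (K : Fin n → Subgroup G) :
    Subgroup (Monoid.CoprodI (fun i => ↥(K i))) :=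
  ⨅ k, (piHat K k).ker

/-- The `n`-fold Higgins commutator `H(K₁, …, Kₙ)` of subgroups of `G`: the image
of the co-smash product under the homomorphism induced by the subgroup
inclusions. -/
def higgins {G : Type*} [Group G] {n : ℕ} (K : Fin n → Subgroup G) : Subgroup G :=
  (cosmash K).map (Monoid.CoprodI.lift (fun i => (K i).subtype))

/-- The left-nested iterated commutator subgroup `⁅⋯⁅⁅K₁,K₂⁆,K₃⁆, …, Kₙ⁆`. -/
def nestedCommutator {G : Type*} [Group G] : {n : ℕ} → (Fin n → Subgroup G) → Subgroup G
  | 0, _ => ⊥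
  | _ + 1, K => (List.ofFn fun i => K i.succ).foldl (fun A B => ⁅A, B⁆) (K 0)


open Monoid Subgroup
open scoped commutatorElement


section Basic

variable {G : Type*} [Group G] {n : ℕ} (K : Fin n → Subgroup G)

def piHat' (K : Fin n → Subgroup G) (k : Fin n) :
    Monoid.CoprodI (fun i => ↥(K i)) →* Monoid.CoprodI (fun i => ↥(K i)) :=
  Monoid.CoprodI.lift
    (fun i => if i = k then 1 else Monoid.CoprodI.of (M := fun i => ↥(K i)) (i := i))

lemma piHat'_of {k i : Fin n} (x : ↥(K i)) :
    piHat' K k (Monoid.CoprodI.of x) =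
      if i = k then 1 else Monoid.CoprodI.of (M := fun i => ↥(K i)) x := by
  rw [piHat', Monoid.CoprodI.lift_of]
  split_ifs <;> rfl

lemma piHat'_comm (j k : Fin n) (x : Monoid.CoprodI (fun i => ↥(K i))) :
    piHat' K j (piHat' K k x) = piHat' K k (piHat' K j x) := by
  have h : (piHat' K j).comp (piHat' K k) = (piHat' K k).comp (piHat' K j) := by
    apply Monoid.CoprodI.ext_hom
    intro i
    ext y
    by_cases hik : i = k <;> by_cases hij : i = j <;>
      simp [piHat'_of, hik, hij] <;> split_ifs <;> simp_all [piHat'_of]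
  calc piHat' K j (piHat' K k x) = ((piHat' K j).comp (piHat' K k)) x := rfl
    _ = ((piHat' K k).comp (piHat' K j)) x := by rw [h]
    _ = piHat' K k (piHat' K j x) := rfl

lemma piHat'_idem (k : Fin n) (x : Monoid.CoprodI (fun i => ↥(K i))) :
    piHat' K k (piHat' K k x) = piHat' K k x := by
  have h : (piHat' K k).comp (piHat' K k) = piHat' K k := by
    apply Monoid.CoprodI.ext_hom
    intro i
    ext y
    by_cases hik : i = k <;> simp [piHat'_of, hik]
  calc piHat' K k (piHat' K k x) = ((piHat' K k).comp (piHat' K k)) x := rfl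
    _ = piHat' K k x := by rw [h]

def Dgrp (T : Finset (Fin n)) : Subgroup (Monoid.CoprodI (fun i => ↥(K i))) :=
  ⨅ k ∈ T, (piHat' K k).ker

lemma mem_Dgrp {T : Finset (Fin n)} {x : Monoid.CoprodI (fun i => ↥(K i))} :
    x ∈ Dgrp K T ↔ ∀ k ∈ T, piHat' K k x = 1 := by
  simp [Dgrp, Subgroup.mem_iInf, MonoidHom.mem_ker]

instance Dgrp_normal (T : Finset (Fin n)) : (Dgrp K T).Normal := by
  refine ⟨fun x hx g => ?_⟩
  rw [mem_Dgrp] at hx ⊢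
  intro k hk
  simp [map_mul, hx k hk]

lemma Dgrp_mono {T T' : Finset (Fin n)} (h : T ⊆ T') : Dgrp K T' ≤ Dgrp K T := by
  intro x hx
  rw [mem_Dgrp] at hx ⊢
  exact fun k hk => hx k (h hk)

lemma piHat'_mem_Dgrp {T : Finset (Fin n)} (j : Fin n)
    {x : Monoid.CoprodI (fun i => ↥(K i))} (hx : x ∈ Dgrp K T) :
    piHat' K j x ∈ Dgrp K T := by
  rw [mem_Dgrp] at hx ⊢
  intro k hk
  rw [piHat'_comm, hx k hk, map_one]

end Basic
section Part2

theorem normal_iSup_of_normal {H : Type*} [Group H] {ι : Sort*} (S : ι → Subgroup H)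
    (hS : ∀ i, (S i).Normal) : (⨆ i, S i).Normal := by
  refine ⟨fun x hx g => ?_⟩
  refine Subgroup.iSup_induction S (C := fun y => g * y * g⁻¹ ∈ ⨆ i, S i) hx
    (fun i y hy => ?_) (by simpa using one_mem (⨆ i, S i)) (fun y z hy hz => ?_)
  · exact le_iSup S i ((hS i).conj_mem y hy g)
  · show g * (y * z) * g⁻¹ ∈ ⨆ i, S i
    have h : g * (y * z) * g⁻¹ = (g * y * g⁻¹) * (g * z * g⁻¹) := by group
    rw [h]
    exact mul_mem hy hz

variable {G : Type*} [Group G] {n : ℕ} (K : Fin n → Subgroup G)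

def Ugrp (T : Finset (Fin n)) : Subgroup (Monoid.CoprodI (fun i => ↥(K i))) :=
  ⨆ A : {A : Finset (Fin n) // A.Nonempty ∧ A ⊆ T ∧ (T \ A).Nonempty},
    ⁅Dgrp K A.1, Dgrp K (T \ A.1)⁆

instance Ugrp_normal (T : Finset (Fin n)) : (Ugrp K T).Normal :=
  normal_iSup_of_normal _ fun _ => Subgroup.commutator_normal _ _

lemma commutator_le_Ugrp {T A : Finset (Fin n)} (hA : A.Nonempty) (hAT : A ⊆ T)
    (hTA : (T \ A).Nonempty) : ⁅Dgrp K A, Dgrp K (T \ A)⁆ ≤ Ugrp K T :=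
  le_iSup (fun A : {A : Finset (Fin n) // A.Nonempty ∧ A ⊆ T ∧ (T \ A).Nonempty} =>
    ⁅Dgrp K A.1, Dgrp K (T \ A.1)⁆) ⟨A, hA, hAT, hTA⟩

lemma commute_mk {T A : Finset (Fin n)} (hA : A.Nonempty) (hAT : A ⊆ T)
    (hTA : (T \ A).Nonempty) {a b : Monoid.CoprodI (fun i => ↥(K i))}
    (ha : a ∈ Dgrp K A) (hb : b ∈ Dgrp K (T \ A)) :
    Commute (QuotientGroup.mk' (Ugrp K T) a) (QuotientGroup.mk' (Ugrp K T) b) := by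
  have h1 : ⁅a, b⁆ ∈ Ugrp K T :=
    commutator_le_Ugrp K hA hAT hTA (Subgroup.commutator_mem_commutator ha hb)
  have h2 : (QuotientGroup.mk' (Ugrp K T)) ⁅a, b⁆ = 1 := by
    rwa [← MonoidHom.mem_ker, QuotientGroup.ker_mk']
  rw [map_commutatorElement] at h2
  exact commutatorElement_eq_one_iff_commute.mp h2

lemma ker_le_normalClosure (k : Fin n) :
    (piHat' K k).ker ≤
      Subgroup.normalClosure
        (Set.range (Monoid.CoprodI.of (M := fun i => ↥(K i)) (i := k))) := by
  set N := Subgroup.normalClosure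
    (Set.range (Monoid.CoprodI.of (M := fun i => ↥(K i)) (i := k))) with hN
  intro x hx
  have hq : (QuotientGroup.mk' N).comp (piHat' K k) = QuotientGroup.mk' N := by
    apply Monoid.CoprodI.ext_hom
    intro i
    ext y
    by_cases h : i = k
    · subst h
      have hy : Monoid.CoprodI.of (M := fun i => ↥(K i)) y ∈ N :=
        Subgroup.subset_normalClosure ⟨y, rfl⟩
      simp only [MonoidHom.comp_apply]
      rw [piHat'_of, if_pos rfl, map_one]
      symm
      rwa [← MonoidHom.mem_ker, QuotientGroup.ker_mk']
    · simp [MonoidHom.comp_apply, piHat'_of, h]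
  have h3 : (QuotientGroup.mk' N) (piHat' K k x) = (QuotientGroup.mk' N) x := by
    rw [← MonoidHom.comp_apply, hq]
  rw [MonoidHom.mem_ker] at hx
  rw [hx, map_one] at h3
  rw [← QuotientGroup.ker_mk' N, MonoidHom.mem_ker]
  exact h3.symm

theorem comm_aux {H : Type*} [Group H] {u a v b : H} (h1 : Commute u v) (h2 : Commute u b)
    (h3 : Commute v a) (h4 : Commute u ⁅a, b⁆) (h5 : Commute v ⁅a, b⁆) :
    ⁅u * a, v * b⁆ = ⁅a, b⁆ := by
  have hab : a * b * a⁻¹ = ⁅a, b⁆ * b := by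
    rw [commutatorElement_def]; group
  calc ⁅u * a, v * b⁆ = u * a * (v * b) * (u * a)⁻¹ * (v * b)⁻¹ := commutatorElement_def _ _
    _ = u * (a * v) * b * a⁻¹ * u⁻¹ * b⁻¹ * v⁻¹ := by group
    _ = u * (v * a) * b * a⁻¹ * u⁻¹ * b⁻¹ * v⁻¹ := by rw [h3.symm.eq]
    _ = u * v * (a * b * a⁻¹) * u⁻¹ * b⁻¹ * v⁻¹ := by group
    _ = u * v * ⁅a, b⁆ * (b * u⁻¹) * b⁻¹ * v⁻¹ := by rw [hab]; group
    _ = u * v * ⁅a, b⁆ * (u⁻¹ * b) * b⁻¹ * v⁻¹ := by rw [h2.inv_left.eq]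
    _ = u * v * (⁅a, b⁆ * u⁻¹) * v⁻¹ := by group
    _ = u * v * (u⁻¹ * ⁅a, b⁆) * v⁻¹ := by rw [h4.inv_left.eq]
    _ = u * v * u⁻¹ * (⁅a, b⁆ * v⁻¹) := by group
    _ = u * v * u⁻¹ * (v⁻¹ * ⁅a, b⁆) := by rw [h5.inv_left.eq]
    _ = (u * v * u⁻¹ * v⁻¹) * ⁅a, b⁆ := by group
    _ = ⁅a, b⁆ := by rw [← commutatorElement_def, commutatorElement_eq_one_iff_commute.mpr h1,
          one_mul]

end Part2
section Part3

lemma conj_eq_of_commute {H : Type*} [Group H] {x y : H} (h : Commute x y) :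
    x * y * x⁻¹ = y := by rw [h.eq]; group

variable {G : Type*} [Group G] {n : ℕ} (K : Fin n → Subgroup G)

theorem Dgrp_le_Ugrp (m : ℕ) : ∀ T : Finset (Fin n), T.card ≤ m → 2 ≤ T.card →
    Dgrp K T ≤ Ugrp K T := by
  induction m with
  | zero => intro T h1 h2; omega
  | succ m ih =>
    intro T hTm hT2 x hx
    obtain ⟨j, hj⟩ := Finset.card_pos.mp (show 0 < T.card by omega)
    set S := T.erase j with hSdef
    have hjS : j ∉ S := Finset.notMem_erase j T
    have hST : S ⊆ T := Finset.erase_subset j T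
    have hins : insert j S = T := Finset.insert_erase hj
    have hScard : S.card = T.card - 1 := Finset.card_erase_of_mem hj
    set q := QuotientGroup.mk' (Ugrp K T) with hqdef
    have key : Dgrp K S ≤ MonoidHom.eqLocus q (q.comp (piHat' K j)) := by
      by_cases hc : S.card = 1
      · -- base case : T.card = 2
        obtain ⟨k, hk⟩ := Finset.card_eq_one.mp hc
        have hkS : k ∈ S := by rw [hk]; exact Finset.mem_singleton_self k
        have hkj : k ≠ j := Finset.ne_of_mem_erase hkS
        have hkT : k ∈ T := hST hkS
        have hTkj : T = {j, k} := by rw [← hins, hk]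
        have hTdj : T \ ({j} : Finset (Fin n)) = {k} := by
          ext a
          simp only [Finset.mem_sdiff, Finset.mem_singleton, hTkj, Finset.mem_insert]
          constructor
          · rintro ⟨h1 | h1, h2⟩
            · exact absurd h1 h2
            · exact h1
          · rintro rfl
            exact ⟨Or.inr rfl, fun h => hkj h⟩
        have hDS : Dgrp K S ≤ (piHat' K k).ker := by
          intro y hy
          rw [MonoidHom.mem_ker]
          exact (mem_Dgrp K).mp hy k hkS
        refine hDS.trans ((ker_le_normalClosure K k).trans ?_)
        show Subgroup.closure _ ≤ _
        rw [Subgroup.closure_le]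
        rintro c hc2
        obtain ⟨a0, ⟨z, rfl⟩, hconj⟩ := Group.mem_conjugatesOfSet_iff.mp hc2
        obtain ⟨w, rfl⟩ := isConj_iff.mp hconj
        show q (w * Monoid.CoprodI.of (M := fun i => ↥(K i)) z * w⁻¹)
          = (q.comp (piHat' K j)) (w * Monoid.CoprodI.of (M := fun i => ↥(K i)) z * w⁻¹)
        have hπz : piHat' K j (Monoid.CoprodI.of (M := fun i => ↥(K i)) z) = Monoid.CoprodI.of (M := fun i => ↥(K i)) z := by
          rw [piHat'_of, if_neg hkj]
        have hπc : piHat' K j (w * Monoid.CoprodI.of (M := fun i => ↥(K i)) z * w⁻¹)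
            = piHat' K j w * Monoid.CoprodI.of (M := fun i => ↥(K i)) z * (piHat' K j w)⁻¹ := by
          rw [map_mul, map_mul, map_inv, hπz]
        have hu : w * (piHat' K j w)⁻¹ ∈ Dgrp K {j} := by
          rw [mem_Dgrp]
          intro k0 hk0
          rw [Finset.mem_singleton] at hk0
          subst hk0
          rw [map_mul, map_inv, piHat'_idem]
          group
        have hm' : piHat' K j w * Monoid.CoprodI.of (M := fun i => ↥(K i)) z * (piHat' K j w)⁻¹ ∈ Dgrp K {k} := by
          rw [mem_Dgrp]
          intro k0 hk0
          rw [Finset.mem_singleton] at hk0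
          subst hk0
          have h1 : piHat' K k0 (Monoid.CoprodI.of (M := fun i => ↥(K i)) z) = 1 := by rw [piHat'_of, if_pos rfl]
          rw [map_mul, map_mul, map_inv, h1]
          group
        have hcm : Commute (q (w * (piHat' K j w)⁻¹))
            (q (piHat' K j w * Monoid.CoprodI.of (M := fun i => ↥(K i)) z * (piHat' K j w)⁻¹)) := by
          refine commute_mk K (Finset.singleton_nonempty j) ?_ ?_ hu ?_
          · intro t ht; rw [Finset.mem_singleton] at ht; subst ht; exact hj
          · rw [hTdj]; exact Finset.singleton_nonempty k
          · rw [hTdj]; exact hm'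
        have hceq : w * Monoid.CoprodI.of (M := fun i => ↥(K i)) z * w⁻¹
            = (w * (piHat' K j w)⁻¹) * (piHat' K j w * Monoid.CoprodI.of (M := fun i => ↥(K i)) z * (piHat' K j w)⁻¹)
              * (w * (piHat' K j w)⁻¹)⁻¹ := by group
        rw [MonoidHom.comp_apply, hπc, hceq, map_mul, map_mul, map_inv]
        exact conj_eq_of_commute hcm
      · -- inductive step : 2 ≤ S.card
        have h2S : 2 ≤ S.card := by omega
        refine (ih S (by omega) h2S).trans ?_
        apply iSup_le
        rintro ⟨A, hA, hAS, hSA⟩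
        rw [Subgroup.commutator_le]
        intro a ha b hb
        set B := S \ A with hBdef
        have hBS : B ⊆ S := Finset.sdiff_subset
        have hjA : j ∉ A := fun h => hjS (hAS h)
        have hjB : j ∉ B := fun h => hjS (hBS h)
        have hP1 : T \ insert j A = B := by
          ext t
          simp only [Finset.mem_sdiff, Finset.mem_insert, hBdef, not_or]
          constructor
          · rintro ⟨htT, htj, htA⟩
            rw [← hins] at htT
            rcases Finset.mem_insert.mp htT with rfl | hts
            · exact absurd rfl htj
            · exact ⟨hts, htA⟩
          · rintro ⟨hts, htA⟩
            refine ⟨hST hts, fun h => ?_, htA⟩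
            subst h; exact hjS hts
        have hP2 : T \ insert j B = A := by
          ext t
          simp only [Finset.mem_sdiff, Finset.mem_insert, hBdef, not_or, not_and, not_not]
          constructor
          · rintro ⟨htT, htj, htB⟩
            rw [← hins] at htT
            rcases Finset.mem_insert.mp htT with rfl | hts
            · exact absurd rfl htj
            · exact htB hts
          · intro htA
            refine ⟨hST (hAS htA), fun h => ?_, fun _ => htA⟩
            subst h; exact hjS (hAS htA)
        have hP1sub : insert j A ⊆ T := by
          intro t ht
          rcases Finset.mem_insert.mp ht with rfl | h
          · exact hj
          · exact hST (hAS h)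
        have hP2sub : insert j B ⊆ T := by
          intro t ht
          rcases Finset.mem_insert.mp ht with rfl | h
          · exact hj
          · exact hST (hBS h)
        have ha' : piHat' K j a ∈ Dgrp K A := piHat'_mem_Dgrp K j ha
        have hb' : piHat' K j b ∈ Dgrp K B := piHat'_mem_Dgrp K j hb
        have hu : a * (piHat' K j a)⁻¹ ∈ Dgrp K (insert j A) := by
          rw [mem_Dgrp]
          intro k hk
          rcases Finset.mem_insert.mp hk with rfl | hkA
          · rw [map_mul, map_inv, piHat'_idem]; group
          · have h1 : piHat' K k a = 1 := (mem_Dgrp K).mp ha k hkA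
            have h2 : piHat' K k (piHat' K j a) = 1 := by
              rw [piHat'_comm, h1, map_one]
            rw [map_mul, map_inv, h1, h2]; group
        have hv : b * (piHat' K j b)⁻¹ ∈ Dgrp K (insert j B) := by
          rw [mem_Dgrp]
          intro k hk
          rcases Finset.mem_insert.mp hk with rfl | hkB
          · rw [map_mul, map_inv, piHat'_idem]; group
          · have h1 : piHat' K k b = 1 := (mem_Dgrp K).mp hb k hkB
            have h2 : piHat' K k (piHat' K j b) = 1 := by
              rw [piHat'_comm, h1, map_one]
            rw [map_mul, map_inv, h1, h2]; group
        have hab'B : ⁅piHat' K j a, piHat' K j b⁆ ∈ Dgrp K B := by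
          rw [commutatorElement_def]
          exact mul_mem ((Dgrp_normal K B).conj_mem _ hb' _) (inv_mem hb')
        have hab'A : ⁅piHat' K j a, piHat' K j b⁆ ∈ Dgrp K A := by
          have h : ⁅piHat' K j a, piHat' K j b⁆
              = piHat' K j a * (piHat' K j b * (piHat' K j a)⁻¹ * (piHat' K j b)⁻¹) := by
            rw [commutatorElement_def]; group
          rw [h]
          exact mul_mem ha' ((Dgrp_normal K A).conj_mem _ (inv_mem ha') _)
        -- the five commutation facts
        have c1 : Commute (q (a * (piHat' K j a)⁻¹)) (q (b * (piHat' K j b)⁻¹)) := by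
          refine commute_mk K (Finset.insert_nonempty j A) hP1sub ?_ hu ?_
          · rw [hP1]; exact hSA
          · rw [hP1]; exact Dgrp_mono K (Finset.subset_insert j B) hv
        have c2 : Commute (q (a * (piHat' K j a)⁻¹)) (q (piHat' K j b)) := by
          refine commute_mk K (Finset.insert_nonempty j A) hP1sub ?_ hu ?_
          · rw [hP1]; exact hSA
          · rw [hP1]; exact hb'
        have c3 : Commute (q (b * (piHat' K j b)⁻¹)) (q (piHat' K j a)) := by
          refine commute_mk K (Finset.insert_nonempty j B) hP2sub ?_ hv ?_
          · rw [hP2]; exact hA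
          · rw [hP2]; exact ha'
        have c4 : Commute (q (a * (piHat' K j a)⁻¹)) ⁅q (piHat' K j a), q (piHat' K j b)⁆ := by
          rw [← map_commutatorElement]
          refine commute_mk K (Finset.insert_nonempty j A) hP1sub ?_ hu ?_
          · rw [hP1]; exact hSA
          · rw [hP1]; exact hab'B
        have c5 : Commute (q (b * (piHat' K j b)⁻¹)) ⁅q (piHat' K j a), q (piHat' K j b)⁆ := by
          rw [← map_commutatorElement]
          refine commute_mk K (Finset.insert_nonempty j B) hP2sub ?_ hv ?_
          · rw [hP2]; exact hA
          · rw [hP2]; exact hab'A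
        show q ⁅a, b⁆ = (q.comp (piHat' K j)) ⁅a, b⁆
        have hπ : piHat' K j ⁅a, b⁆ = ⁅piHat' K j a, piHat' K j b⁆ :=
          map_commutatorElement _ _ _
        have hua : a * (piHat' K j a)⁻¹ * piHat' K j a = a := by group
        have hvb : b * (piHat' K j b)⁻¹ * piHat' K j b = b := by group
        rw [MonoidHom.comp_apply, hπ]
        calc q ⁅a, b⁆ = ⁅q a, q b⁆ := map_commutatorElement _ _ _
          _ = ⁅q (a * (piHat' K j a)⁻¹) * q (piHat' K j a),
                q (b * (piHat' K j b)⁻¹) * q (piHat' K j b)⁆ := by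
              rw [← map_mul, ← map_mul, hua, hvb]
          _ = ⁅q (piHat' K j a), q (piHat' K j b)⁆ := comm_aux c1 c2 c3 c4 c5
          _ = q ⁅piHat' K j a, piHat' K j b⁆ := (map_commutatorElement _ _ _).symm
    -- conclude
    have hxS : x ∈ Dgrp K S := Dgrp_mono K hST hx
    have h1 : q x = (q.comp (piHat' K j)) x := key hxS
    have h2 : piHat' K j x = 1 := (mem_Dgrp K).mp hx j hj
    rw [MonoidHom.comp_apply, h2, map_one] at h1
    rw [← QuotientGroup.ker_mk' (Ugrp K T), MonoidHom.mem_ker]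
    exact h1

end Part3
section Part4

lemma lcs_succ_comm {H : Type*} [Group H] (k : ℕ) :
    (⊤ : Subgroup H).lowerCentralSeries (k + 1) = ⁅(⊤ : Subgroup H).lowerCentralSeries k, ⊤⁆ := rfl

theorem three_subgroups_le {H : Type*} [Group H] (A B C : Subgroup H)
    [A.Normal] [B.Normal] [C.Normal] :
    ⁅⁅A, B⁆, C⁆ ≤ ⁅⁅B, C⁆, A⁆ ⊔ ⁅⁅C, A⁆, B⁆ := by
  set R := ⁅⁅B, C⁆, A⁆ ⊔ ⁅⁅C, A⁆, B⁆ with hR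
  set f := QuotientGroup.mk' R with hf
  have h1 : ⁅⁅Subgroup.map f B, Subgroup.map f C⁆, Subgroup.map f A⁆ = ⊥ := by
    rw [← Subgroup.map_commutator, ← Subgroup.map_commutator, Subgroup.map_eq_bot_iff,
      hf, QuotientGroup.ker_mk']
    exact le_sup_left
  have h2 : ⁅⁅Subgroup.map f C, Subgroup.map f A⁆, Subgroup.map f B⁆ = ⊥ := by
    rw [← Subgroup.map_commutator, ← Subgroup.map_commutator, Subgroup.map_eq_bot_iff,
      hf, QuotientGroup.ker_mk']
    exact le_sup_right
  have h3 := Subgroup.commutator_commutator_eq_bot_of_rotate h1 h2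
  rw [← Subgroup.map_commutator, ← Subgroup.map_commutator, Subgroup.map_eq_bot_iff,
    hf, QuotientGroup.ker_mk'] at h3
  exact h3

theorem lcs_comm_le {H : Type*} [Group H] :
    ∀ j i : ℕ, ⁅(⊤ : Subgroup H).lowerCentralSeries i, (⊤ : Subgroup H).lowerCentralSeries j⁆
      ≤ (⊤ : Subgroup H).lowerCentralSeries (i + j + 1) := by
  intro j
  induction j with
  | zero =>
    intro i
    rw [show i + 0 + 1 = i + 1 from rfl, lcs_succ_comm]
    exact Subgroup.commutator_mono le_rfl le_top
  | succ j ihj =>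
    intro i
    rw [lcs_succ_comm j, Subgroup.commutator_comm]
    refine (three_subgroups_le _ _ _).trans ?_
    apply sup_le
    · rw [Subgroup.commutator_comm (⊤ : Subgroup H), ← lcs_succ_comm]
      refine (ihj (i + 1)).trans (le_of_eq ?_)
      congr 1
      omega
    · refine (Subgroup.commutator_mono (ihj i) le_rfl).trans ?_
      rw [← lcs_succ_comm]
      exact le_of_eq (congrArg _ (by omega))

variable {G : Type*} [Group G] {n : ℕ} (K : Fin n → Subgroup G)

theorem map_Dgrp_le {G₂ : Type*} [Group G₂] (φ : Monoid.CoprodI (fun i => ↥(K i)) →* G₂)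
    (m : ℕ) : ∀ T : Finset (Fin n), T.card ≤ m → T.Nonempty →
      (Dgrp K T).map φ ≤ (⊤ : Subgroup G₂).lowerCentralSeries (T.card - 1) := by
  induction m with
  | zero =>
    intro T h1 h2
    have := h2.card_pos
    omega
  | succ m ih =>
    intro T hTm hT
    by_cases hc : T.card ≤ 1
    · have h0 : T.card - 1 = 0 := by omega
      rw [h0, Subgroup.lowerCentralSeries_zero]
      exact le_top
    · have h2 : 2 ≤ T.card := by omega
      refine (Subgroup.map_mono (Dgrp_le_Ugrp K T.card T le_rfl h2)).trans ?_
      rw [Ugrp, Subgroup.map_iSup]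
      apply iSup_le
      rintro ⟨A, hA, hAT, hTA⟩
      rw [Subgroup.map_commutator]
      obtain ⟨t, ht⟩ := hTA
      rw [Finset.mem_sdiff] at ht
      have hss : A ⊂ T := ⟨hAT, fun hTA2 => ht.2 (hTA2 ht.1)⟩
      have hAcard : A.card ≤ m := by
        have := Finset.card_lt_card hss
        omega
      have hBc : (T \ A).card = T.card - A.card := Finset.card_sdiff_of_subset hAT
      have hA1 : 1 ≤ A.card := hA.card_pos
      have hB1 : 1 ≤ (T \ A).card := Finset.card_pos.mpr ⟨t, Finset.mem_sdiff.mpr ht⟩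
      have hBcard : (T \ A).card ≤ m := by omega
      refine (Subgroup.commutator_mono (ih A hAcard hA)
        (ih (T \ A) hBcard ⟨t, Finset.mem_sdiff.mpr ht⟩)).trans ?_
      refine (lcs_comm_le _ _).trans (le_of_eq ?_)
      congr 1
      omega

end Part4
section Part5

variable {G : Type*} [Group G]

lemma foldl_replicate_succ (l : ℕ) (A : Subgroup G) :
    (List.replicate (l + 1) (⊤ : Subgroup G)).foldl (fun A B => ⁅A, B⁆) A
      = ⁅(List.replicate l (⊤ : Subgroup G)).foldl (fun A B => ⁅A, B⁆) A, ⊤⁆ := by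
  induction l generalizing A with
  | zero => rfl
  | succ l ihl =>
    rw [List.replicate_succ, List.foldl_cons, ihl, List.replicate_succ, List.foldl_cons]

lemma foldl_replicate_top (l : ℕ) :
    (List.replicate l (⊤ : Subgroup G)).foldl (fun A B => ⁅A, B⁆) ⊤
      = (⊤ : Subgroup G).lowerCentralSeries l := by
  induction l with
  | zero => rfl
  | succ l ihl => rw [foldl_replicate_succ, ihl, ← lcs_succ_comm]

lemma nested_top_eq (m : ℕ) :
    nestedCommutator (fun _ : Fin (m + 1) => (⊤ : Subgroup G))
      = (⊤ : Subgroup G).lowerCentralSeries m := by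
  have h : nestedCommutator (fun _ : Fin (m + 1) => (⊤ : Subgroup G))
      = (List.ofFn fun _ : Fin m => (⊤ : Subgroup G)).foldl (fun A B => ⁅A, B⁆) ⊤ := rfl
  rw [h, List.ofFn_const, foldl_replicate_top]

lemma cosmash_eq_Dgrp {n : ℕ} (K : Fin n → Subgroup G) :
    cosmash K = Dgrp K Finset.univ := by
  ext x
  constructor
  · intro h
    rw [mem_Dgrp]
    intro k _
    have := Subgroup.mem_iInf.mp h k
    rwa [MonoidHom.mem_ker] at this
  · intro h
    rw [mem_Dgrp] at h
    exact Subgroup.mem_iInf.mpr fun k => MonoidHom.mem_ker.mpr (h k (Finset.mem_univ k))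

lemma chain_exists {n : ℕ} (hn : 0 < n) :
    ∀ i : ℕ, i < n →
      ∃ B : Subgroup (Monoid.CoprodI
          (fun j : Fin n => ↥((fun _ : Fin n => (⊤ : Subgroup G)) j))),
        B.Normal ∧ (∀ k : Fin n, k.val ≤ i → B ≤ (piHat' (fun _ => ⊤) k).ker) ∧
          (⊤ : Subgroup G).lowerCentralSeries i ≤
            B.map (Monoid.CoprodI.lift (fun j => ((fun _ : Fin n => (⊤ : Subgroup G)) j).subtype)) := by
  intro i
  induction i with
  | zero =>
    intro h0
    refine ⟨(piHat' (fun _ => ⊤) ⟨0, h0⟩).ker, inferInstance, ?_, ?_⟩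
    · intro k hk
      have hkeq : k = ⟨0, h0⟩ := Fin.ext (by show k.val = 0; omega)
      rw [hkeq]
    · rw [Subgroup.lowerCentralSeries_zero]
      intro g _
      refine Subgroup.mem_map.mpr
        ⟨Monoid.CoprodI.of (M := fun j : Fin n => ↥((fun _ : Fin n => (⊤ : Subgroup G)) j))
        (i := ⟨0, h0⟩) ⟨g, Subgroup.mem_top g⟩, ?_, ?_⟩
      · rw [MonoidHom.mem_ker, piHat'_of, if_pos rfl]
      · rw [Monoid.CoprodI.lift_of]
        rfl
  | succ i ihi =>
    intro hsn
    obtain ⟨B, hBnorm, hBker, hBlcs⟩ := ihi (by omega)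
    haveI := hBnorm
    refine ⟨⁅B, (piHat' (fun _ => ⊤) ⟨i + 1, hsn⟩).ker⁆, inferInstance, ?_, ?_⟩
    · intro k hk
      rcases Nat.lt_or_ge k.val (i + 1) with h | h
      · exact (Subgroup.commutator_le_left _ _).trans (hBker k (by omega))
      · have hkeq : k = ⟨i + 1, hsn⟩ := Fin.ext (by show k.val = i + 1; omega)
        rw [hkeq]
        exact Subgroup.commutator_le_right _ _
    · rw [lcs_succ_comm, Subgroup.map_commutator]
      refine Subgroup.commutator_mono hBlcs ?_
      intro g _
      refine Subgroup.mem_map.mpr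
        ⟨Monoid.CoprodI.of (M := fun j : Fin n => ↥((fun _ : Fin n => (⊤ : Subgroup G)) j))
        (i := ⟨i + 1, hsn⟩) ⟨g, Subgroup.mem_top g⟩, ?_, ?_⟩
      · rw [MonoidHom.mem_ker, piHat'_of, if_pos rfl]
      · rw [Monoid.CoprodI.lift_of]
        rfl

end Part5

theorem higgins_top_eq_nested_eq_lowerCentralSeries' {G : Type*} [Group G] {n : ℕ}
    (hn : 3 ≤ n) :
    higgins (fun _ : Fin n => (⊤ : Subgroup G)) =
        nestedCommutator (fun _ : Fin n => (⊤ : Subgroup G)) ∧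
      nestedCommutator (fun _ : Fin n => (⊤ : Subgroup G)) =
        (⊤ : Subgroup G).lowerCentralSeries (n - 1) := by
  obtain ⟨m, rfl⟩ : ∃ m, n = m + 1 := ⟨n - 1, by omega⟩
  have hm : m + 1 - 1 = m := by omega
  have hnested : nestedCommutator (fun _ : Fin (m + 1) => (⊤ : Subgroup G))
      = (⊤ : Subgroup G).lowerCentralSeries (m + 1 - 1) := by
    rw [hm]; exact nested_top_eq m
  have hpi : ∀ k, piHat (fun _ : Fin (m + 1) => (⊤ : Subgroup G)) k
      = piHat' (fun _ : Fin (m + 1) => (⊤ : Subgroup G)) k := fun _ => rfl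
  have hcos : cosmash (fun _ : Fin (m + 1) => (⊤ : Subgroup G))
      = Dgrp (fun _ : Fin (m + 1) => (⊤ : Subgroup G)) Finset.univ := by
    rw [show (piHat (fun _ : Fin (m + 1) => (⊤ : Subgroup G)))
      = (piHat' (fun _ : Fin (m + 1) => (⊤ : Subgroup G))) from rfl] at *
    exact cosmash_eq_Dgrp _
  have hle : higgins (fun _ : Fin (m + 1) => (⊤ : Subgroup G))
      ≤ (⊤ : Subgroup G).lowerCentralSeries (m + 1 - 1) := by
    rw [higgins, hcos, hm]
    have hcard : (Finset.univ : Finset (Fin (m + 1))).card = m + 1 := by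
      rw [Finset.card_univ, Fintype.card_fin]
    have := map_Dgrp_le (fun _ : Fin (m + 1) => (⊤ : Subgroup G))
      (Monoid.CoprodI.lift (fun i => ((fun _ : Fin (m + 1) => (⊤ : Subgroup G)) i).subtype))
      (m + 1) Finset.univ (le_of_eq hcard) Finset.univ_nonempty
    rwa [hcard, Nat.add_sub_cancel] at this
  have hge : (⊤ : Subgroup G).lowerCentralSeries (m + 1 - 1)
      ≤ higgins (fun _ : Fin (m + 1) => (⊤ : Subgroup G)) := by
    obtain ⟨B, _, hBker, hBlcs⟩ := chain_exists (G := G) (n := m + 1) (by omega) m (by omega)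
    rw [hm]
    refine hBlcs.trans ?_
    rw [higgins]
    apply Subgroup.map_mono
    rw [hcos]
    intro x hx
    rw [mem_Dgrp]
    intro k _
    have := hBker k (by omega) hx
    rwa [MonoidHom.mem_ker] at this
  exact ⟨(le_antisymm hle hge).trans hnested.symm, hnested⟩


/-- For `n ≥ 3`, the `n`-fold Higgins commutator of `n` copies of `⊤` equals the
left-nested iterated commutator subgroup of `n` copies of `⊤`, and hence the
`(n-1)`-st term of the lower central series of `G`. -/
theorem higgins_top_eq_nested_eq_lowerCentralSeries {G : Type*} [Group G] {n : ℕ}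
    (hn : 3 ≤ n) :
    higgins (fun _ : Fin n => (⊤ : Subgroup G)) =
        nestedCommutator (fun _ : Fin n => (⊤ : Subgroup G)) ∧
      nestedCommutator (fun _ : Fin n => (⊤ : Subgroup G)) =
        (⊤ : Subgroup G).lowerCentralSeries (n - 1) :=
  higgins_top_eq_nested_eq_lowerCentralSeries' hn
end

section
/- Let n ≥ 2 and let K₁, …, K_{n-1}, K, L be subgroups of a group G. Then the Higgins commutator satisfies the join decomposition formula H(K₁, …, K_{n-1}, K ⊔ L) = H(K₁, …, K_{n-1}, K) ⊔ H(K₁, …, K_{n-1}, L) ⊔ H(K₁, …, K_{n-1}, K, L), where the last term is an (n+1)-fold Higgins commutator. -/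
namespace HigginsAux

open Monoid.CoprodI Subgroup

variable {G : Type*} [Group G]

theorem piHat_of {n : ℕ} (K : Fin n → Subgroup G) (k i : Fin n) (x : ↥(K i)) :
    piHat K k (Monoid.CoprodI.of x) =
      if i = k then 1 else Monoid.CoprodI.of (M := fun i => ↥(K i)) (i := i) x := by
  unfold piHat
  rw [Monoid.CoprodI.lift_of]
  split_ifs <;> rfl

theorem piHat_of_self {n : ℕ} (K : Fin n → Subgroup G) (k : Fin n) (x : ↥(K k)) :
    piHat K k (Monoid.CoprodI.of x) = 1 := by simp [piHat_of]

theorem piHat_of_ne {n : ℕ} (K : Fin n → Subgroup G) {k i : Fin n} (h : i ≠ k) (x : ↥(K i)) :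
    piHat K k (Monoid.CoprodI.of x) =
      Monoid.CoprodI.of (M := fun i => ↥(K i)) (i := i) x := by simp [piHat_of, h]

theorem piHat_piHat {n : ℕ} (K : Fin n → Subgroup G) (k l : Fin n) (x) :
    piHat K k (piHat K l x) = piHat K l (piHat K k x) := by
  induction x using Monoid.CoprodI.induction_on with
  | one => simp
  | of i y =>
      rcases eq_or_ne i k with rfl | hk
      · rcases eq_or_ne i l with rfl | hl
        · rfl
        · rw [piHat_of_ne K hl, piHat_of_self, map_one]
      · rcases eq_or_ne i l with rfl | hl
        · rw [piHat_of_self, map_one, piHat_of_ne K hk, piHat_of_self]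
        · rw [piHat_of_ne K hl, piHat_of_ne K hk, piHat_of_ne K hl]
  | mul a b ha hb => simp [map_mul, ha, hb]

theorem piHat_idem {n : ℕ} (K : Fin n → Subgroup G) (k : Fin n) (x) :
    piHat K k (piHat K k x) = piHat K k x := by
  induction x using Monoid.CoprodI.induction_on with
  | one => simp
  | of i y =>
      rcases eq_or_ne i k with rfl | hk
      · rw [piHat_of_self, map_one]
      · rw [piHat_of_ne K hk, piHat_of_ne K hk]
  | mul a b ha hb => simp [map_mul, ha, hb]

theorem mem_cosmash {n : ℕ} {K : Fin n → Subgroup G} {x} :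
    x ∈ cosmash K ↔ ∀ k, piHat K k x = 1 := by
  simp [cosmash, Subgroup.mem_iInf, MonoidHom.mem_ker]

theorem correction {Q P : Type*} [Group Q] [Group P] {ι : Type*}
    (Φ : Q →* P) (e : ι → (Q →* Q)) (f : ι → (P →* P))
    (hcomm : ∀ i j x, e i (e j x) = e j (e i x))
    (hidem : ∀ i x, e i (e i x) = e i x)
    (hΦ : ∀ i x, Φ (e i x) = f i (Φ x)) :
    ∀ (l : List ι) (y : P), (∀ i ∈ l, f i y = 1) → ∀ x : Q, Φ x = y →
      ∃ x' : Q, Φ x' = y ∧ ∀ i ∈ l, e i x' = 1 := by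
  intro l
  induction l with
  | nil => exact fun y _ x hx => ⟨x, hx, by simp⟩
  | cons j l ih =>
      intro y hy x hx
      obtain ⟨x', hx', hl⟩ := ih y (fun i hi => hy i (List.mem_cons_of_mem _ hi)) x hx
      refine ⟨x' * (e j x')⁻¹, ?_, ?_⟩
      · rw [map_mul, map_inv, hx', hΦ, hx', hy j List.mem_cons_self, inv_one, mul_one]
      · intro i hi
        rcases List.mem_cons.mp hi with rfl | hi
        · rw [map_mul, map_inv, hidem, mul_inv_cancel]
        · rw [map_mul, map_inv, hl i hi, hcomm, hl i hi, map_one, inv_one, one_mul]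

end HigginsAux

section Main

open Monoid.CoprodI Subgroup

variable {G : Type*} [Group G] {m : ℕ} (K : Fin m → Subgroup G) (A B : Subgroup G)

/-- The family `K₁, …, Kₘ, A ⊔ B`. -/
def fP : Fin (m + 1) → Subgroup G := Fin.snoc K (A ⊔ B)

/-- The family `K₁, …, Kₘ, A`. -/
def fA : Fin (m + 1) → Subgroup G := Fin.snoc K A

/-- The family `K₁, …, Kₘ, B`. -/
def fB : Fin (m + 1) → Subgroup G := Fin.snoc K B

/-- The family `K₁, …, Kₘ, A, B`. -/
def fQ : Fin (m + 2) → Subgroup G := Fin.snoc (Fin.snoc K A) B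

theorem fP_cs (j : Fin m) : fP K A B j.castSucc = K j := by simp [fP]
theorem fP_last : fP K A B (Fin.last m) = A ⊔ B := by simp [fP]
theorem fA_cs (j : Fin m) : fA K A j.castSucc = K j := by simp [fA]
theorem fA_last : fA K A (Fin.last m) = A := by simp [fA]
theorem fB_cs (j : Fin m) : fB K B j.castSucc = K j := by simp [fB]
theorem fB_last : fB K B (Fin.last m) = B := by simp [fB]
theorem fQ_cs (j : Fin (m + 1)) : fQ K A B j.castSucc = fA K A j := by simp [fQ, fA]
theorem fQ_last : fQ K A B (Fin.last (m + 1)) = B := by simp [fQ]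
theorem fQ_A : fQ K A B (Fin.last m).castSucc = A := by simp [fQ, fA_last, fA]
theorem fQ_cc (k : Fin m) : fQ K A B k.castSucc.castSucc = K k := by simp [fQ, fA]

def tgt {m : ℕ} : Fin (m + 2) → Fin (m + 1) :=
  Fin.lastCases (Fin.last m) (fun j => j)

theorem tgt_last {m : ℕ} : tgt (Fin.last (m + 1)) = Fin.last m := Fin.lastCases_last

theorem tgt_castSucc {m : ℕ} (j : Fin (m + 1)) : tgt j.castSucc = j := Fin.lastCases_castSucc j

def sigB {m : ℕ} : Fin (m + 1) → Fin (m + 2) :=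
  Fin.lastCases (Fin.last (m + 1)) (fun k => k.castSucc.castSucc)

theorem sigB_last {m : ℕ} : sigB (Fin.last m) = Fin.last (m + 1) := Fin.lastCases_last

theorem sigB_castSucc {m : ℕ} (k : Fin m) : sigB k.castSucc = k.castSucc.castSucc :=
  Fin.lastCases_castSucc k

theorem hle (i : Fin (m + 2)) : fQ K A B i ≤ fP K A B (tgt i) := by
  induction i using Fin.lastCases with
  | last => rw [tgt_last, fQ_last, fP_last]; exact le_sup_right
  | cast j =>
      rw [tgt_castSucc, fQ_cs]
      induction j using Fin.lastCases with
      | last => rw [fA_last, fP_last]; exact le_sup_left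
      | cast k => rw [fA_cs, fP_cs]

theorem leQA (j : Fin (m + 1)) : fA K A j ≤ fQ K A B j.castSucc := by rw [fQ_cs]

theorem leAQ (j : Fin (m + 1)) : fQ K A B j.castSucc ≤ fA K A j := by rw [fQ_cs]

theorem leQB (j : Fin (m + 1)) : fB K B j ≤ fQ K A B (sigB j) := by
  induction j using Fin.lastCases with
  | last => rw [sigB_last, fB_last, fQ_last]
  | cast k => rw [sigB_castSucc, fB_cs, fQ_cc]

theorem leBQlast : fQ K A B (Fin.last (m + 1)) ≤ fB K B (Fin.last m) := by
  rw [fB_last, fQ_last]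

theorem leBQcc (k : Fin m) : fQ K A B k.castSucc.castSucc ≤ fB K B k.castSucc := by
  rw [fB_cs, fQ_cc]

def Phi : Monoid.CoprodI (fun i => ↥(fQ K A B i)) →* Monoid.CoprodI (fun i => ↥(fP K A B i)) :=
  Monoid.CoprodI.lift fun i =>
    (Monoid.CoprodI.of (M := fun i => ↥(fP K A B i)) (i := tgt i)).comp
      (Subgroup.inclusion (hle K A B i))

theorem Phi_of (i : Fin (m + 2)) (x : ↥(fQ K A B i)) :
    Phi K A B (Monoid.CoprodI.of x) =
      Monoid.CoprodI.of (M := fun i => ↥(fP K A B i))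
        (Subgroup.inclusion (hle K A B i) x) := by
  unfold Phi; rw [Monoid.CoprodI.lift_of]; rfl

def embA : Monoid.CoprodI (fun j => ↥(fA K A j)) →* Monoid.CoprodI (fun i => ↥(fQ K A B i)) :=
  Monoid.CoprodI.lift fun j =>
    (Monoid.CoprodI.of (M := fun i => ↥(fQ K A B i)) (i := j.castSucc)).comp
      (Subgroup.inclusion (leQA K A B j))

theorem embA_of (j : Fin (m + 1)) (x : ↥(fA K A j)) :
    embA K A B (Monoid.CoprodI.of x) =
      Monoid.CoprodI.of (M := fun i => ↥(fQ K A B i))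
        (Subgroup.inclusion (leQA K A B j) x) := by
  unfold embA; rw [Monoid.CoprodI.lift_of]; rfl

def embB : Monoid.CoprodI (fun j => ↥(fB K B j)) →* Monoid.CoprodI (fun i => ↥(fQ K A B i)) :=
  Monoid.CoprodI.lift fun j =>
    (Monoid.CoprodI.of (M := fun i => ↥(fQ K A B i)) (i := sigB j)).comp
      (Subgroup.inclusion (leQB K A B j))

theorem embB_of (j : Fin (m + 1)) (x : ↥(fB K B j)) :
    embB K A B (Monoid.CoprodI.of x) =
      Monoid.CoprodI.of (M := fun i => ↥(fQ K A B i))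
        (Subgroup.inclusion (leQB K A B j) x) := by
  unfold embB; rw [Monoid.CoprodI.lift_of]; rfl

def rhoA : Monoid.CoprodI (fun i => ↥(fQ K A B i)) →* Monoid.CoprodI (fun j => ↥(fA K A j)) :=
  Monoid.CoprodI.lift fun i =>
    Fin.lastCases (motive := fun i => ↥(fQ K A B i) →* Monoid.CoprodI (fun j => ↥(fA K A j))) 1
      (fun j => (Monoid.CoprodI.of (M := fun j => ↥(fA K A j)) (i := j)).comp
        (Subgroup.inclusion (leAQ K A B j))) i

theorem rhoA_of_last (x : ↥(fQ K A B (Fin.last (m + 1)))) :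
    rhoA K A B (Monoid.CoprodI.of x) = 1 := by
  unfold rhoA; rw [Monoid.CoprodI.lift_of, Fin.lastCases_last]; rfl

theorem rhoA_of_cast (j : Fin (m + 1)) (x : ↥(fQ K A B j.castSucc)) :
    rhoA K A B (Monoid.CoprodI.of x) =
      Monoid.CoprodI.of (M := fun j => ↥(fA K A j))
        (Subgroup.inclusion (leAQ K A B j) x) := by
  unfold rhoA; rw [Monoid.CoprodI.lift_of, Fin.lastCases_castSucc]; rfl

def rhoB : Monoid.CoprodI (fun i => ↥(fQ K A B i)) →* Monoid.CoprodI (fun j => ↥(fB K B j)) :=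
  Monoid.CoprodI.lift fun i =>
    Fin.lastCases (motive := fun i => ↥(fQ K A B i) →* Monoid.CoprodI (fun j => ↥(fB K B j)))
      ((Monoid.CoprodI.of (M := fun j => ↥(fB K B j)) (i := Fin.last m)).comp
        (Subgroup.inclusion (leBQlast K A B)))
      (fun j => Fin.lastCases (motive := fun j =>
          ↥(fQ K A B j.castSucc) →* Monoid.CoprodI (fun j => ↥(fB K B j))) 1
        (fun k => (Monoid.CoprodI.of (M := fun j => ↥(fB K B j)) (i := k.castSucc)).comp
          (Subgroup.inclusion (leBQcc K A B k))) j) i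

theorem rhoB_of_last (x : ↥(fQ K A B (Fin.last (m + 1)))) :
    rhoB K A B (Monoid.CoprodI.of x) =
      Monoid.CoprodI.of (M := fun j => ↥(fB K B j))
        (Subgroup.inclusion (leBQlast K A B) x) := by
  unfold rhoB; rw [Monoid.CoprodI.lift_of, Fin.lastCases_last]; rfl

theorem rhoB_of_A (x : ↥(fQ K A B (Fin.last m).castSucc)) :
    rhoB K A B (Monoid.CoprodI.of x) = 1 := by
  unfold rhoB; rw [Monoid.CoprodI.lift_of, Fin.lastCases_castSucc, Fin.lastCases_last]; rfl

theorem rhoB_of_cc (k : Fin m) (x : ↥(fQ K A B k.castSucc.castSucc)) :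
    rhoB K A B (Monoid.CoprodI.of x) =
      Monoid.CoprodI.of (M := fun j => ↥(fB K B j))
        (Subgroup.inclusion (leBQcc K A B k) x) := by
  unfold rhoB; rw [Monoid.CoprodI.lift_of, Fin.lastCases_castSucc, Fin.lastCases_castSucc]; rfl

end Main

section Idents

open Monoid.CoprodI Subgroup HigginsAux

variable {G : Type*} [Group G] {m : ℕ} (K : Fin m → Subgroup G) (A B : Subgroup G)

theorem piHat_of_eq_idx {n : ℕ} (Kf : Fin n → Subgroup G) {k i : Fin n} (h : i = k)
    (x : ↥(Kf i)) : piHat Kf k (Monoid.CoprodI.of x) = 1 := by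
  subst h; exact piHat_of_self _ _ x

theorem of_coe_eq {n : ℕ} {Kf : Fin n → Subgroup G} {i : Fin n} {x y : ↥(Kf i)}
    (h : (x : G) = (y : G)) :
    Monoid.CoprodI.of (M := fun i => ↥(Kf i)) x = Monoid.CoprodI.of (M := fun i => ↥(Kf i)) y :=
  congrArg _ (Subtype.ext h)

theorem lift_subtype_of {n : ℕ} (Kf : Fin n → Subgroup G) (i : Fin n) (x : ↥(Kf i)) :
    Monoid.CoprodI.lift (fun i => (Kf i).subtype)
      (Monoid.CoprodI.of (M := fun i => ↥(Kf i)) x) = ↑x := by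
  rw [Monoid.CoprodI.lift_of]; rfl

theorem ne_iB_iA : (Fin.last (m + 1)) ≠ ((Fin.last m).castSucc : Fin (m + 2)) :=
  (Fin.castSucc_lt_last _).ne'

theorem ne_cc_iA (k : Fin m) :
    (k.castSucc.castSucc : Fin (m + 2)) ≠ (Fin.last m).castSucc := fun h =>
  (Fin.castSucc_lt_last k).ne (Fin.castSucc_inj.mp h)

-- (id3)  κP ∘ Φ = κQ
theorem kappa_Phi (x) :
    Monoid.CoprodI.lift (fun i => (fP K A B i).subtype) (Phi K A B x) =
      Monoid.CoprodI.lift (fun i => (fQ K A B i).subtype) x := by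
  induction x using Monoid.CoprodI.induction_on with
  | one => simp
  | of i y => rw [Phi_of, lift_subtype_of, lift_subtype_of, Subgroup.coe_inclusion]
  | mul a b ha hb => simp [map_mul, ha, hb]

-- (id1)  Φ ∘ π̂Q(cck) = π̂P(ck) ∘ Φ
theorem Phi_piHat_cc (k : Fin m) (x) :
    Phi K A B (piHat (fQ K A B) k.castSucc.castSucc x) =
      piHat (fP K A B) k.castSucc (Phi K A B x) := by
  induction x using Monoid.CoprodI.induction_on with
  | one => simp
  | of i y =>
      induction i using Fin.lastCases with
      | last =>
          rw [piHat_of_ne _ ((Fin.castSucc_lt_last _).ne' :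
              Fin.last (m + 1) ≠ k.castSucc.castSucc), Phi_of,
            piHat_of_ne _ (show tgt (Fin.last (m + 1)) ≠ k.castSucc by
              rw [tgt_last]; exact (Fin.castSucc_lt_last k).ne')]
      | cast j =>
          rcases eq_or_ne j.castSucc k.castSucc.castSucc with h | h
          · rw [piHat_of_eq_idx _ h, map_one, Phi_of,
              piHat_of_eq_idx _ (by rw [tgt_castSucc]; exact Fin.castSucc_inj.mp h)]
          · rw [piHat_of_ne _ h, Phi_of,
              piHat_of_ne _ (show tgt j.castSucc ≠ k.castSucc by
                rw [tgt_castSucc]; exact fun hh => h (by rw [hh]))]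
  | mul a b ha hb => simp [map_mul, ha, hb]

-- (id2)  Φ ∘ π̂Q(iA) ∘ π̂Q(iB) = π̂P(last) ∘ Φ
theorem Phi_piHat_AB (x) :
    Phi K A B (piHat (fQ K A B) (Fin.last m).castSucc
        (piHat (fQ K A B) (Fin.last (m + 1)) x)) =
      piHat (fP K A B) (Fin.last m) (Phi K A B x) := by
  induction x using Monoid.CoprodI.induction_on with
  | one => simp
  | of i y =>
      induction i using Fin.lastCases with
      | last =>
          rw [piHat_of_self, map_one, map_one, Phi_of,
            piHat_of_eq_idx _ (by rw [tgt_last])]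
      | cast j =>
          rw [piHat_of_ne _ (Fin.castSucc_lt_last j).ne]
          induction j using Fin.lastCases with
          | last =>
              rw [piHat_of_self, map_one, Phi_of,
                piHat_of_eq_idx _ (by rw [tgt_castSucc])]
          | cast k =>
              rw [piHat_of_ne _ (ne_cc_iA k), Phi_of,
                piHat_of_ne _ (show tgt k.castSucc.castSucc ≠ Fin.last m by
                  rw [tgt_castSucc]; exact (Fin.castSucc_lt_last k).ne)]
  | mul a b ha hb => simp [map_mul, ha, hb]

end Idents

section Idents2

open Monoid.CoprodI Subgroup HigginsAux

variable {G : Type*} [Group G] {m : ℕ} (K : Fin m → Subgroup G) (A B : Subgroup G)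

theorem of_index_congr {n : ℕ} {Kf : Fin n → Subgroup G} {i i' : Fin n} (h : i = i')
    {x : ↥(Kf i)} {y : ↥(Kf i')} (hxy : (x : G) = (y : G)) :
    Monoid.CoprodI.of (M := fun i => ↥(Kf i)) x =
      Monoid.CoprodI.of (M := fun i => ↥(Kf i)) y := by
  subst h; exact of_coe_eq hxy

theorem sigB_injective {m : ℕ} : Function.Injective (sigB (m := m)) := by
  intro a b h
  induction a using Fin.lastCases with
  | last =>
      induction b using Fin.lastCases with
      | last => rfl
      | cast k =>
          rw [sigB_last, sigB_castSucc] at h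
          exact absurd h (Fin.castSucc_lt_last _).ne'
  | cast k =>
      induction b using Fin.lastCases with
      | last =>
          rw [sigB_last, sigB_castSucc] at h
          exact absurd h (Fin.castSucc_lt_last _).ne
      | cast k' =>
          rw [sigB_castSucc, sigB_castSucc] at h
          rw [Fin.castSucc_inj.mp (Fin.castSucc_inj.mp h)]

theorem sigB_ne_iA {m : ℕ} (j : Fin (m + 1)) : sigB j ≠ (Fin.last m).castSucc := by
  induction j using Fin.lastCases with
  | last => rw [sigB_last]; exact (Fin.castSucc_lt_last _).ne'
  | cast k => rw [sigB_castSucc]; exact ne_cc_iA k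

-- (id4a)
theorem kappa_embA (x) :
    Monoid.CoprodI.lift (fun i => (fQ K A B i).subtype) (embA K A B x) =
      Monoid.CoprodI.lift (fun j => (fA K A j).subtype) x := by
  induction x using Monoid.CoprodI.induction_on with
  | one => simp
  | of j y => rw [embA_of, lift_subtype_of, lift_subtype_of, Subgroup.coe_inclusion]
  | mul a b ha hb => simp [map_mul, ha, hb]

-- (id4b)
theorem kappa_embB (x) :
    Monoid.CoprodI.lift (fun i => (fQ K A B i).subtype) (embB K A B x) =
      Monoid.CoprodI.lift (fun j => (fB K B j).subtype) x := by
  induction x using Monoid.CoprodI.induction_on with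
  | one => simp
  | of j y => rw [embB_of, lift_subtype_of, lift_subtype_of, Subgroup.coe_inclusion]
  | mul a b ha hb => simp [map_mul, ha, hb]

-- (id5)
theorem piHat_embA (j : Fin (m + 1)) (x) :
    piHat (fQ K A B) j.castSucc (embA K A B x) = embA K A B (piHat (fA K A) j x) := by
  induction x using Monoid.CoprodI.induction_on with
  | one => simp
  | of j' y =>
      rcases eq_or_ne j' j with rfl | h
      · rw [embA_of, piHat_of_eq_idx _ rfl, piHat_of_self, map_one]
      · rw [embA_of, piHat_of_ne _ (fun hh => h (Fin.castSucc_inj.mp hh)),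
          piHat_of_ne _ h, embA_of]
  | mul a b ha hb => simp [map_mul, ha, hb]

-- (id6)
theorem piHat_iB_embA (x) :
    piHat (fQ K A B) (Fin.last (m + 1)) (embA K A B x) = embA K A B x := by
  induction x using Monoid.CoprodI.induction_on with
  | one => simp
  | of j y => rw [embA_of, piHat_of_ne _ (Fin.castSucc_lt_last j).ne]
  | mul a b ha hb => simp [map_mul, ha, hb]

-- (id7)
theorem piHat_embB (j : Fin (m + 1)) (x) :
    piHat (fQ K A B) (sigB j) (embB K A B x) = embB K A B (piHat (fB K B) j x) := by
  induction x using Monoid.CoprodI.induction_on with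
  | one => simp
  | of j' y =>
      rcases eq_or_ne j' j with rfl | h
      · rw [embB_of, piHat_of_eq_idx _ rfl, piHat_of_self, map_one]
      · rw [embB_of, piHat_of_ne _ (fun hh => h (sigB_injective hh)),
          piHat_of_ne _ h, embB_of]
  | mul a b ha hb => simp [map_mul, ha, hb]

-- (id8)
theorem piHat_iA_embB (x) :
    piHat (fQ K A B) (Fin.last m).castSucc (embB K A B x) = embB K A B x := by
  induction x using Monoid.CoprodI.induction_on with
  | one => simp
  | of j y => rw [embB_of, piHat_of_ne _ (sigB_ne_iA j)]
  | mul a b ha hb => simp [map_mul, ha, hb]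

-- (id9)
theorem embA_rhoA (x) :
    embA K A B (rhoA K A B x) = piHat (fQ K A B) (Fin.last (m + 1)) x := by
  induction x using Monoid.CoprodI.induction_on with
  | one => simp
  | of i y =>
      induction i using Fin.lastCases with
      | last => rw [rhoA_of_last, map_one, piHat_of_self]
      | cast j =>
          rw [rhoA_of_cast, embA_of, piHat_of_ne _ (Fin.castSucc_lt_last j).ne]
          exact of_coe_eq (by simp [Subgroup.coe_inclusion])
  | mul a b ha hb => simp [map_mul, ha, hb]

-- (id10)
theorem rhoA_piHat (j : Fin (m + 1)) (x) :
    rhoA K A B (piHat (fQ K A B) j.castSucc x) = piHat (fA K A) j (rhoA K A B x) := by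
  induction x using Monoid.CoprodI.induction_on with
  | one => simp
  | of i y =>
      induction i using Fin.lastCases with
      | last => rw [piHat_of_ne _ (Fin.castSucc_lt_last j).ne', rhoA_of_last, map_one]
      | cast j' =>
          rcases eq_or_ne j' j with rfl | h
          · rw [piHat_of_eq_idx _ rfl, map_one, rhoA_of_cast, piHat_of_self]
          · rw [piHat_of_ne _ (fun hh => h (Fin.castSucc_inj.mp hh)), rhoA_of_cast,
              piHat_of_ne _ h]
  | mul a b ha hb => simp [map_mul, ha, hb]

-- (id11)
theorem rhoA_piHat_iB (x) :
    rhoA K A B (piHat (fQ K A B) (Fin.last (m + 1)) x) = rhoA K A B x := by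
  induction x using Monoid.CoprodI.induction_on with
  | one => simp
  | of i y =>
      induction i using Fin.lastCases with
      | last => rw [piHat_of_self, map_one, rhoA_of_last]
      | cast j => rw [piHat_of_ne _ (Fin.castSucc_lt_last j).ne]
  | mul a b ha hb => simp [map_mul, ha, hb]

-- (id12)
theorem embB_rhoB (x) :
    embB K A B (rhoB K A B x) = piHat (fQ K A B) (Fin.last m).castSucc x := by
  induction x using Monoid.CoprodI.induction_on with
  | one => simp
  | of i y =>
      induction i using Fin.lastCases with
      | last =>
          rw [rhoB_of_last, embB_of, piHat_of_ne _ (ne_iB_iA (m := m))]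
          exact of_index_congr sigB_last (by simp [Subgroup.coe_inclusion])
      | cast j =>
          induction j using Fin.lastCases with
          | last => rw [rhoB_of_A, map_one, piHat_of_self]
          | cast k =>
              rw [rhoB_of_cc, embB_of, piHat_of_ne _ (ne_cc_iA k)]
              exact of_index_congr (sigB_castSucc k) (by simp [Subgroup.coe_inclusion])
  | mul a b ha hb => simp [map_mul, ha, hb]

-- (id13) for the last index
theorem rhoB_piHat_last (x) :
    rhoB K A B (piHat (fQ K A B) (Fin.last (m + 1)) x) =
      piHat (fB K B) (Fin.last m) (rhoB K A B x) := by
  induction x using Monoid.CoprodI.induction_on with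
  | one => simp
  | of i y =>
      induction i using Fin.lastCases with
      | last => rw [piHat_of_self, map_one, rhoB_of_last, piHat_of_self]
      | cast j =>
          induction j using Fin.lastCases with
          | last => rw [piHat_of_ne _ (Fin.castSucc_lt_last _).ne, rhoB_of_A, map_one]
          | cast k =>
              rw [piHat_of_ne _ (Fin.castSucc_lt_last _).ne, rhoB_of_cc,
                piHat_of_ne _ (Fin.castSucc_lt_last k).ne]
  | mul a b ha hb => simp [map_mul, ha, hb]

-- (id13) for a castSucc index
theorem rhoB_piHat_cc (k : Fin m) (x) :
    rhoB K A B (piHat (fQ K A B) k.castSucc.castSucc x) =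
      piHat (fB K B) k.castSucc (rhoB K A B x) := by
  induction x using Monoid.CoprodI.induction_on with
  | one => simp
  | of i y =>
      induction i using Fin.lastCases with
      | last =>
          rw [piHat_of_ne _ (Fin.castSucc_lt_last _).ne', rhoB_of_last,
            piHat_of_ne _ (Fin.castSucc_lt_last _).ne']
      | cast j =>
          induction j using Fin.lastCases with
          | last => rw [piHat_of_ne _ (Ne.symm (ne_cc_iA k)), rhoB_of_A, map_one]
          | cast k' =>
              rcases eq_or_ne k' k with rfl | h
              · rw [piHat_of_eq_idx _ rfl, map_one, rhoB_of_cc, piHat_of_self]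
              · rw [piHat_of_ne _ (fun hh => h
                    (Fin.castSucc_inj.mp (Fin.castSucc_inj.mp hh))), rhoB_of_cc,
                  piHat_of_ne _ (fun hh => h (Fin.castSucc_inj.mp hh))]
  | mul a b ha hb => simp [map_mul, ha, hb]

end Idents2

section Final

open Monoid.CoprodI Subgroup HigginsAux

variable {G : Type*} [Group G] {m : ℕ} (K : Fin m → Subgroup G) (A B : Subgroup G)

def eE : Fin (m + 1) →
    (Monoid.CoprodI (fun i => ↥(fQ K A B i)) →* Monoid.CoprodI (fun i => ↥(fQ K A B i))) :=
  Fin.lastCases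
    ((piHat (fQ K A B) (Fin.last m).castSucc).comp (piHat (fQ K A B) (Fin.last (m + 1))))
    (fun k => piHat (fQ K A B) k.castSucc.castSucc)

theorem eE_last : eE K A B (Fin.last m) =
    (piHat (fQ K A B) (Fin.last m).castSucc).comp (piHat (fQ K A B) (Fin.last (m + 1))) :=
  Fin.lastCases_last

theorem eE_cast (k : Fin m) : eE K A B k.castSucc = piHat (fQ K A B) k.castSucc.castSucc :=
  Fin.lastCases_castSucc k

theorem eE_comm (j j' : Fin (m + 1)) (x) :
    eE K A B j (eE K A B j' x) = eE K A B j' (eE K A B j x) := by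
  induction j using Fin.lastCases with
  | last =>
      induction j' using Fin.lastCases with
      | last => rfl
      | cast k =>
          simp only [eE_last, eE_cast, MonoidHom.comp_apply]
          rw [piHat_piHat _ k.castSucc.castSucc (Fin.last m).castSucc,
            piHat_piHat _ k.castSucc.castSucc (Fin.last (m + 1))]
  | cast k =>
      induction j' using Fin.lastCases with
      | last =>
          simp only [eE_last, eE_cast, MonoidHom.comp_apply]
          rw [piHat_piHat _ k.castSucc.castSucc (Fin.last m).castSucc,
            piHat_piHat _ k.castSucc.castSucc (Fin.last (m + 1))]
      | cast k' =>
          simp only [eE_cast]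
          exact piHat_piHat _ _ _ _

theorem eE_idem (j : Fin (m + 1)) (x) : eE K A B j (eE K A B j x) = eE K A B j x := by
  induction j using Fin.lastCases with
  | last =>
      simp only [eE_last, MonoidHom.comp_apply]
      rw [piHat_piHat _ (Fin.last (m + 1)) (Fin.last m).castSucc, piHat_idem, piHat_idem]
  | cast k =>
      simp only [eE_cast]
      exact piHat_idem _ _ _

theorem Phi_eE (j : Fin (m + 1)) (x) :
    Phi K A B (eE K A B j x) = piHat (fP K A B) j (Phi K A B x) := by
  induction j using Fin.lastCases with
  | last => simp only [eE_last, MonoidHom.comp_apply]; exact Phi_piHat_AB K A B x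
  | cast k => simp only [eE_cast]; exact Phi_piHat_cc K A B k x

theorem Phi_surjective : Function.Surjective (Phi K A B) := by
  intro y
  induction y using Monoid.CoprodI.induction_on with
  | one => exact ⟨1, map_one _⟩
  | mul a b ha hb =>
      obtain ⟨xa, hxa⟩ := ha
      obtain ⟨xb, hxb⟩ := hb
      exact ⟨xa * xb, by rw [map_mul, hxa, hxb]⟩
  | of i g =>
      induction i using Fin.lastCases with
      | cast j =>
          refine ⟨Monoid.CoprodI.of (M := fun i => ↥(fQ K A B i)) (i := j.castSucc.castSucc)
              (Subgroup.inclusion (by rw [fP_cs, fQ_cc]) g), ?_⟩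
          rw [Phi_of]
          exact of_index_congr (tgt_castSucc j.castSucc) (by simp [Subgroup.coe_inclusion])
      | last =>
          have key : ∀ g' : G, g' ∈ A ⊔ B → ∀ hg : g' ∈ fP K A B (Fin.last m),
              Monoid.CoprodI.of (M := fun i => ↥(fP K A B i)) ⟨g', hg⟩ ∈
                (Phi K A B).range := by
            have hA : A ≤ Subgroup.map (fP K A B (Fin.last m)).subtype
                (Subgroup.comap (Monoid.CoprodI.of (M := fun i => ↥(fP K A B i))
                  (i := Fin.last m)) (Phi K A B).range) := by
              intro a ha
              have hfp : a ∈ fP K A B (Fin.last m) := by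
                rw [fP_last]; exact Subgroup.mem_sup_left ha
              refine Subgroup.mem_map.mpr ⟨⟨a, hfp⟩, ?_, rfl⟩
              rw [Subgroup.mem_comap]
              refine MonoidHom.mem_range.mpr ⟨Monoid.CoprodI.of (M := fun i => ↥(fQ K A B i))
                (i := (Fin.last m).castSucc) ⟨a, by rw [fQ_A]; exact ha⟩, ?_⟩
              rw [Phi_of]
              exact of_index_congr (tgt_castSucc (Fin.last m)) (by simp [Subgroup.coe_inclusion])
            have hB : B ≤ Subgroup.map (fP K A B (Fin.last m)).subtype
                (Subgroup.comap (Monoid.CoprodI.of (M := fun i => ↥(fP K A B i))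
                  (i := Fin.last m)) (Phi K A B).range) := by
              intro b hb
              have hfp : b ∈ fP K A B (Fin.last m) := by
                rw [fP_last]; exact Subgroup.mem_sup_right hb
              refine Subgroup.mem_map.mpr ⟨⟨b, hfp⟩, ?_, rfl⟩
              rw [Subgroup.mem_comap]
              refine MonoidHom.mem_range.mpr ⟨Monoid.CoprodI.of (M := fun i => ↥(fQ K A B i))
                (i := Fin.last (m + 1)) ⟨b, by rw [fQ_last]; exact hb⟩, ?_⟩
              rw [Phi_of]
              exact of_index_congr tgt_last (by simp [Subgroup.coe_inclusion])
            intro g' hg' hg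
            obtain ⟨t, ht, hcoe⟩ := Subgroup.mem_map.mp (sup_le hA hB hg')
            rw [Subgroup.mem_comap] at ht
            have hteq : t = ⟨g', hg⟩ := Subtype.ext hcoe
            rw [← hteq]
            exact ht
          obtain ⟨gv, hgv⟩ := g
          have h' : gv ∈ A ⊔ B := by
            have h2 := hgv; rwa [fP_last] at h2
          exact MonoidHom.mem_range.mp (key gv h' hgv)

end Final

section Steps

open Monoid.CoprodI Subgroup HigginsAux

variable {G : Type*} [Group G] {m : ℕ} (K : Fin m → Subgroup G) (A B : Subgroup G)

theorem step1 : higgins (fP K A B) =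
    Subgroup.map (Monoid.CoprodI.lift (fun i => (fQ K A B i).subtype))
      (⨅ j : Fin (m + 1), (eE K A B j).ker) := by
  apply le_antisymm
  · intro z hz
    obtain ⟨y, hy, rfl⟩ := Subgroup.mem_map.mp hz
    have hy' : ∀ j, piHat (fP K A B) j y = 1 := mem_cosmash.mp hy
    obtain ⟨x₀, hx₀⟩ := Phi_surjective K A B y
    obtain ⟨x', hx', hxe⟩ := HigginsAux.correction (Phi K A B) (eE K A B)
      (fun j => piHat (fP K A B) j) (eE_comm K A B) (eE_idem K A B) (Phi_eE K A B)
      (List.finRange (m + 1)) y (fun i _ => hy' i) x₀ hx₀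
    refine Subgroup.mem_map.mpr ⟨x', ?_, ?_⟩
    · rw [Subgroup.mem_iInf]
      intro j
      rw [MonoidHom.mem_ker]
      exact hxe j (List.mem_finRange j)
    · rw [← hx']
      exact (kappa_Phi K A B x').symm
  · intro z hz
    obtain ⟨x, hx, rfl⟩ := Subgroup.mem_map.mp hz
    have hxj : ∀ j, eE K A B j x = 1 := by
      intro j; exact (MonoidHom.mem_ker).mp (Subgroup.mem_iInf.mp hx j)
    refine Subgroup.mem_map.mpr ⟨Phi K A B x, ?_, kappa_Phi K A B x⟩
    rw [mem_cosmash]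
    intro j
    rw [← Phi_eE, hxj j, map_one]

theorem step2 :
    Subgroup.map (Monoid.CoprodI.lift (fun i => (fQ K A B i).subtype))
      (⨅ j : Fin (m + 1), (eE K A B j).ker) =
    higgins (fA K A) ⊔ higgins (fB K B) ⊔ higgins (fQ K A B) := by
  apply le_antisymm
  · intro z hz
    obtain ⟨x, hx, rfl⟩ := Subgroup.mem_map.mp hz
    have hk : ∀ k : Fin m, piHat (fQ K A B) k.castSucc.castSucc x = 1 := by
      intro k
      have h := (MonoidHom.mem_ker).mp (Subgroup.mem_iInf.mp hx k.castSucc)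
      rwa [eE_cast] at h
    have hAB : piHat (fQ K A B) (Fin.last m).castSucc
        (piHat (fQ K A B) (Fin.last (m + 1)) x) = 1 := by
      have h := (MonoidHom.mem_ker).mp (Subgroup.mem_iInf.mp hx (Fin.last m))
      rwa [eE_last] at h
    set u := x * (piHat (fQ K A B) (Fin.last (m + 1)) x)⁻¹ with hu
    have hu_cc : ∀ k : Fin m, piHat (fQ K A B) k.castSucc.castSucc u = 1 := by
      intro k
      rw [hu, map_mul, map_inv, hk k, piHat_piHat, hk k, map_one, inv_one, one_mul]
    have hu_B : piHat (fQ K A B) (Fin.last (m + 1)) u = 1 := by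
      rw [hu, map_mul, map_inv, piHat_idem, mul_inv_cancel]
    have hxeq : x = (u * (piHat (fQ K A B) (Fin.last m).castSucc u)⁻¹) *
        piHat (fQ K A B) (Fin.last m).castSucc u *
        piHat (fQ K A B) (Fin.last (m + 1)) x := by
      rw [inv_mul_cancel_right, hu, inv_mul_cancel_right]
    have mA : Monoid.CoprodI.lift (fun i => (fQ K A B i).subtype)
        (piHat (fQ K A B) (Fin.last (m + 1)) x) ∈ higgins (fA K A) := by
      rw [← embA_rhoA, kappa_embA]
      refine Subgroup.mem_map.mpr ⟨rhoA K A B x, ?_, rfl⟩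
      rw [mem_cosmash]
      intro j
      induction j using Fin.lastCases with
      | last =>
          rw [← rhoA_piHat, ← rhoA_piHat_iB,
            piHat_piHat _ (Fin.last (m + 1)) (Fin.last m).castSucc, hAB, map_one]
      | cast k => rw [← rhoA_piHat, hk k, map_one]
    have mB : Monoid.CoprodI.lift (fun i => (fQ K A B i).subtype)
        (piHat (fQ K A B) (Fin.last m).castSucc u) ∈ higgins (fB K B) := by
      rw [← embB_rhoB, kappa_embB]
      refine Subgroup.mem_map.mpr ⟨rhoB K A B u, ?_, rfl⟩
      rw [mem_cosmash]
      intro j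
      induction j using Fin.lastCases with
      | last => rw [← rhoB_piHat_last, hu_B, map_one]
      | cast k => rw [← rhoB_piHat_cc, hu_cc k, map_one]
    have mQ : Monoid.CoprodI.lift (fun i => (fQ K A B i).subtype)
        (u * (piHat (fQ K A B) (Fin.last m).castSucc u)⁻¹) ∈ higgins (fQ K A B) := by
      refine Subgroup.mem_map.mpr ⟨_, ?_, rfl⟩
      rw [mem_cosmash]
      intro i
      induction i using Fin.lastCases with
      | last =>
          rw [map_mul, map_inv, hu_B, piHat_piHat, hu_B, map_one, inv_one, one_mul]
      | cast j =>
          induction j using Fin.lastCases with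
          | last => rw [map_mul, map_inv, piHat_idem, mul_inv_cancel]
          | cast k =>
              rw [map_mul, map_inv, hu_cc k, piHat_piHat, hu_cc k, map_one, inv_one, one_mul]
    rw [hxeq, map_mul, map_mul]
    exact mul_mem (mul_mem (Subgroup.mem_sup_right mQ)
        (Subgroup.mem_sup_left (Subgroup.mem_sup_right mB)))
      (Subgroup.mem_sup_left (Subgroup.mem_sup_left mA))
  · refine sup_le (sup_le ?_ ?_) ?_
    · intro z hz
      obtain ⟨s, hs, rfl⟩ := Subgroup.mem_map.mp hz
      refine Subgroup.mem_map.mpr ⟨embA K A B s, ?_, kappa_embA K A B s⟩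
      rw [Subgroup.mem_iInf]
      intro j
      rw [MonoidHom.mem_ker]
      induction j using Fin.lastCases with
      | last =>
          rw [eE_last, MonoidHom.comp_apply, piHat_iB_embA, piHat_embA,
            mem_cosmash.mp hs (Fin.last m), map_one]
      | cast k =>
          rw [eE_cast, piHat_embA, mem_cosmash.mp hs k.castSucc, map_one]
    · intro z hz
      obtain ⟨s, hs, rfl⟩ := Subgroup.mem_map.mp hz
      refine Subgroup.mem_map.mpr ⟨embB K A B s, ?_, kappa_embB K A B s⟩
      rw [Subgroup.mem_iInf]
      intro j
      rw [MonoidHom.mem_ker]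
      induction j using Fin.lastCases with
      | last =>
          rw [eE_last, MonoidHom.comp_apply, ← sigB_last, piHat_embB,
            mem_cosmash.mp hs (Fin.last m), map_one, map_one]
      | cast k =>
          rw [eE_cast, ← sigB_castSucc, piHat_embB, mem_cosmash.mp hs k.castSucc, map_one]
    · intro z hz
      obtain ⟨x, hx, rfl⟩ := Subgroup.mem_map.mp hz
      refine Subgroup.mem_map.mpr ⟨x, ?_, rfl⟩
      rw [Subgroup.mem_iInf]
      intro j
      rw [MonoidHom.mem_ker]
      induction j using Fin.lastCases with
      | last =>
          rw [eE_last, MonoidHom.comp_apply, mem_cosmash.mp hx (Fin.last (m + 1)), map_one]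
      | cast k => rw [eE_cast]; exact mem_cosmash.mp hx k.castSucc.castSucc

end Steps


/-- **Join decomposition formula for Higgins commutators in groups.** For `n = m + 1 ≥ 2`
and subgroups `K₁, …, K_{n-1}` (given by `K : Fin m → Subgroup G`) and `A`, `B` of `G`,
`H(K₁, …, K_{n-1}, A ⊔ B) = H(K₁, …, K_{n-1}, A) ⊔ H(K₁, …, K_{n-1}, B) ⊔ H(K₁, …, K_{n-1}, A, B)`. -/
theorem higgins_sup_decomposition {G : Type*} [Group G] {m : ℕ} (hm : 1 ≤ m)
    (K : Fin m → Subgroup G) (A B : Subgroup G) :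
    higgins (Fin.snoc K (A ⊔ B)) =
      higgins (Fin.snoc K A) ⊔ higgins (Fin.snoc K B) ⊔
        higgins (Fin.snoc (Fin.snoc K A) B) := by
  exact (step1 K A B).trans (step2 K A B)
end
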